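/- arXiv:0802.3691 — 3 statements merged into one kernel-verified Lean document; each statement's English description precedes it below -/
import Mathlib

section
/- Let a_1,...,a_r be elements of a commutative ℚ-algebra that are nilpotent. If ∑_{i=1}^r a_i^j = 0 for all j ≥ 2, then ∏_{i=1}^r (1 + a_i) = exp(∑_{i=1}^r a_i). -/
/-!
STATEMENT 1. Let `a_1, …, a_r` be nilpotent elements of a commutative `ℚ`-algebra.
If `∑ i, a i ^ j = 0` for all `j ≥ 2`, then `∏ i, (1 + a i) = exp (∑ i, a i)`,
where for a nilpotent element `x` (say `x ^ N = 0`) the exponential is the finite sum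
`∑_{k < N} x ^ k / k!` (this value is independent of the choice of such an `N`).
-/

/-- The truncated exponential `∑_{k < N} x^k / k!` of an element of a `ℚ`-algebra. -/
def truncExp {A : Type*} [CommRing A] [Algebra ℚ A] (x : A) (N : ℕ) : A :=
  ∑ k ∈ Finset.range N, ((k.factorial : ℚ)⁻¹) • x ^ k

/-!
Write `s = ∑ aᵢ` and `eₖ` for the elementary symmetric functions of the `aᵢ`. When all power
sums of degree `≥ 2` vanish, Newton's identities reduce to `k eₖ = eₖ₋₁ s`, so `eₖ = sᵏ / k!`.
Hence `∏ (1 + aᵢ) = ∑ₖ eₖ` and the truncated exponential `∑_{k < N} sᵏ / k!` are the same sum,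
once one notes that `eₖ` vanishes both for `k > r` and for `k ≥ N`.
-/

open Finset MvPolynomial

section

variable {σ R : Type*} [Fintype σ] [CommRing R]

theorem eval_esymm_eq_zero_of_card_lt (a : σ → R) {k : ℕ} (hk : Fintype.card σ < k) :
    eval a (esymm σ R k) = 0 := by
  simp [esymm, (powersetCard_eq_empty (s := (univ : Finset σ))).mpr (by rwa [card_univ])]

theorem prod_one_add_eq_sum_eval_esymm (a : σ → R) :
    ∏ i, (1 + a i) = ∑ k ∈ range (Fintype.card σ + 1), eval a (esymm σ R k) := by
  rw [prod_one_add, sum_powerset]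
  simp [esymm]

/-- Newton's identities collapse to a single term when the power sums of degree `≥ 2` vanish. -/
theorem succ_mul_eval_esymm_succ_of_sum_pow_eq_zero (a : σ → R)
    (hp : ∀ j, 2 ≤ j → ∑ i, a i ^ j = 0) (k : ℕ) :
    (k + 1 : R) * eval a (esymm σ R (k + 1)) = eval a (esymm σ R k) * ∑ i, a i := by
  have newton := congrArg (eval a) (mul_esymm_eq_sum σ R (k + 1))
  have hsum : ∑ x ∈ antidiagonal (k + 1) with x.1 < k + 1,
      (-1 : R) ^ x.1 * eval a (esymm σ R x.1) * eval a (psum σ R x.2) =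
        (-1) ^ k * eval a (esymm σ R k) * ∑ i, a i := by
    rw [sum_eq_single_of_mem (k, 1) (by simp)]
    · simp [psum]
    · rintro ⟨i, j⟩ hij hne
      have hj : 2 ≤ j := by
        simp only [mem_filter, HasAntidiagonal.mem_antidiagonal] at hij
        by_contra! hj
        exact hne (by ext <;> simp <;> omega)
      simp [psum, hp j hj]
  simp only [map_mul, map_pow, map_neg, map_one, map_natCast, map_sum, hsum] at newton
  rw [Nat.cast_succ] at newton
  rw [newton, ← mul_assoc, ← mul_assoc, ← pow_add, Even.neg_one_pow ⟨k + 1, by omega⟩, one_mul]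

theorem factorial_mul_eval_esymm_of_sum_pow_eq_zero (a : σ → R)
    (hp : ∀ j, 2 ≤ j → ∑ i, a i ^ j = 0) (k : ℕ) :
    (k.factorial : R) * eval a (esymm σ R k) = (∑ i, a i) ^ k := by
  induction k with
  | zero => simp
  | succ k ih =>
    rw [Nat.factorial_succ, Nat.cast_mul, Nat.cast_succ, mul_comm _ (k.factorial : R), mul_assoc,
      succ_mul_eval_esymm_succ_of_sum_pow_eq_zero a hp, ← mul_assoc, ih, pow_succ]

end

section

variable {σ A : Type*} [Fintype σ] [CommRing A] [Algebra ℚ A]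

theorem eval_esymm_eq_inv_factorial_smul_of_sum_pow_eq_zero (a : σ → A)
    (hp : ∀ j, 2 ≤ j → ∑ i, a i ^ j = 0) (k : ℕ) :
    eval a (esymm σ A k) = (k.factorial : ℚ)⁻¹ • (∑ i, a i) ^ k := by
  rw [← factorial_mul_eval_esymm_of_sum_pow_eq_zero a hp, ← nsmul_eq_mul,
    ← Nat.cast_smul_eq_nsmul ℚ, smul_smul, inv_mul_cancel₀ (by positivity), one_smul]

theorem truncExp_sum_eq_sum_eval_esymm (a : σ → A) (hp : ∀ j, 2 ≤ j → ∑ i, a i ^ j = 0)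
    (N : ℕ) : truncExp (∑ i, a i) N = ∑ k ∈ range N, eval a (esymm σ A k) := by
  simp only [truncExp, eval_esymm_eq_inv_factorial_smul_of_sum_pow_eq_zero a hp]

end

theorem prod_one_add_eq_exp_sum_of_power_sums_vanish_general
    {A : Type*} [CommRing A] [Algebra ℚ A] (r : ℕ) (a : Fin r → A)
    (hp : ∀ j : ℕ, 2 ≤ j → (∑ i, a i ^ j : A) = 0) :
    ∀ N : ℕ, (∑ i, a i) ^ N = 0 →
      (∏ i, (1 + a i) : A) = truncExp (∑ i, a i) N := by
  intro N hN
  have hzero : ∀ k ≥ min (r + 1) N, eval a (esymm (Fin r) A k) = 0 := by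
    intro k hk
    rcases min_le_iff.mp hk with hkr | hkN
    · exact eval_esymm_eq_zero_of_card_lt a (by simpa using hkr)
    · rw [eval_esymm_eq_inv_factorial_smul_of_sum_pow_eq_zero a hp, pow_eq_zero_of_le hkN hN,
        smul_zero]
  rw [prod_one_add_eq_sum_eval_esymm, truncExp_sum_eq_sum_eval_esymm a hp, Fintype.card_fin,
    eventually_constant_sum hzero (min_le_left _ _),
    eventually_constant_sum hzero (min_le_right _ _)]

theorem prod_one_add_eq_exp_sum_of_power_sums_vanish
    {A : Type*} [CommRing A] [Algebra ℚ A] (r : ℕ) (a : Fin r → A)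
    (hnil : ∀ i, IsNilpotent (a i))
    (hp : ∀ j : ℕ, 2 ≤ j → (∑ i, a i ^ j : A) = 0) :
    ∀ N : ℕ, (∑ i, a i) ^ N = 0 →
      (∏ i, (1 + a i) : A) = truncExp (∑ i, a i) N :=
  prod_one_add_eq_exp_sum_of_power_sums_vanish_general r a hp
end

section
/- Let a_1,...,a_r be nilpotent elements of a commutative ℚ-algebra such that ∏_{i=1}^r (1 + a_i t) = exp(c t) as polynomials in t, where c = ∑_{i=1}^r a_i. Then ∑_{i=1}^r a_i^j = 0 for all j ≥ 2. -/
/-!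
STATEMENT 2. Let `a_1, …, a_r` be nilpotent elements of a commutative `ℚ`-algebra such
that `∏ i, (1 + a i * t) = exp (c * t)` as polynomials in `t`, where `c = ∑ i, a i`.
Then `∑ i, a i ^ j = 0` for all `j ≥ 2`.  Here `exp` of the nilpotent element `c * t`
of `A[t]` is the finite exponential sum `∑_{k < N} (c*t)^k / k!` for any `N` with
`c ^ N = 0`.
-/

open Polynomial

private lemma myDerivFinsetProd {R ι : Type*} [CommRing R] [DecidableEq ι]
    (s : Finset ι) (f : ι → R[X]) :
    derivative (∏ i ∈ s, f i) = ∑ i ∈ s, (∏ j ∈ s.erase i, f j) * derivative (f i) := by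
  induction s using Finset.induction with
  | empty => simp
  | @insert a s ha ih =>
    rw [Finset.prod_insert ha, derivative_mul, ih, Finset.sum_insert ha,
      Finset.erase_insert ha, Finset.mul_sum]
    rw [mul_comm (derivative (f a)) (∏ i ∈ s, f i)]
    congr 1
    apply Finset.sum_congr rfl
    intro i hi
    rw [Finset.erase_insert_of_ne (by rintro rfl; exact ha hi),
      Finset.prod_insert (by simp [ha])]
    ring

set_option maxRecDepth 4000 in
theorem power_sums_vanish_of_prod_eq_exp
    {A : Type*} [CommRing A] [Algebra ℚ A] (r : ℕ) (a : Fin r → A)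
    (hnil : ∀ i, IsNilpotent (a i)) (N : ℕ)
    (hN : (∑ i, a i) ^ N = 0)
    (h : (∏ i, (1 + C (a i) * X) : A[X])
          = truncExp (C (∑ i, a i) * X) N) :
    ∀ j : ℕ, 2 ≤ j → (∑ i, a i ^ j : A) = 0 := by
  intro j hj
  set c : A := ∑ i, a i with hc
  -- uniform nilpotency bound
  obtain ⟨M, hM, hjM⟩ : ∃ M : ℕ, (∀ i, a i ^ M = 0) ∧ j ≤ M := by
    choose n hn using hnil
    refine ⟨j + ∑ i, n i, fun i => ?_, Nat.le_add_right _ _⟩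
    have h1 : n i ≤ j + ∑ i, n i :=
      (Finset.single_le_sum (fun _ _ => Nat.zero_le _) (Finset.mem_univ i)).trans
        (Nat.le_add_left _ _)
    obtain ⟨m, hm⟩ := Nat.exists_eq_add_of_le h1
    rw [hm, pow_add, hn i, zero_mul]
  -- inverses of 1 + a i X
  set u : Fin r → A[X] := fun i => 1 + C (a i) * X with hu
  set Q : Fin r → A[X] := fun i => ∑ k ∈ Finset.range M, (-(C (a i) * X)) ^ k with hQdef
  have hQu : ∀ i, Q i * u i = 1 := by
    intro i
    have := geom_sum_mul (-(C (a i) * X)) M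
    have hz : (-(C (a i) * X)) ^ M = 0 := by
      rw [neg_pow, mul_pow, ← C_pow, hM i, C_0, zero_mul, mul_zero]
    rw [hz, zero_sub] at this
    have : Q i * (-(u i)) = -1 := by
      rw [hQdef, hu]; convert this using 2; ring
    linear_combination -this
  -- derivative of the product side
  have hderivP : derivative (∏ i, u i) = ∑ i, (∏ k ∈ Finset.univ.erase i, u k) * C (a i) := by
    rw [myDerivFinsetProd]
    apply Finset.sum_congr rfl
    intro i _
    congr 1
    rw [hu]; simp
  -- derivative of the exp side
  have hderivE : derivative (truncExp (C c * X) N) = C c * truncExp (C c * X) N := by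
    unfold truncExp
    rw [derivative_sum, Finset.mul_sum]
    have hL : ∀ k ∈ Finset.range N,
        derivative (((k.factorial : ℚ))⁻¹ • (C c * X) ^ k)
          = ((k.factorial : ℚ))⁻¹ • (C (c ^ k * (k : A)) * X ^ (k - 1)) := by
      intro k _
      rw [derivative_smul, mul_pow, ← C_pow, derivative_C_mul_X_pow]
    have hR : ∀ k ∈ Finset.range N,
        C c * ((k.factorial : ℚ))⁻¹ • (C c * X) ^ k
          = ((k.factorial : ℚ))⁻¹ • (C (c ^ (k + 1)) * X ^ k) := by
      intro k _
      rw [mul_smul_comm, mul_pow, ← C_pow, ← mul_assoc, ← C_mul, ← pow_succ']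
    rw [Finset.sum_congr rfl hL, Finset.sum_congr rfl hR]
    cases N with
    | zero => simp
    | succ n =>
      rw [Finset.sum_range_succ' _ n, Finset.sum_range_succ]
      have hz1 : ((Nat.factorial 0 : ℚ))⁻¹ • (C (c ^ 0 * ((0 : ℕ) : A)) * X ^ (0 - 1))
          = (0 : A[X]) := by
        simp
      have hz2 : ((Nat.factorial n : ℚ))⁻¹ • (C (c ^ (n + 1)) * X ^ n) = (0 : A[X]) := by
        rw [hN]
        simp
      rw [hz1, hz2, add_zero, add_zero]
      apply Finset.sum_congr rfl
      intro k _
      have hfac : (((k + 1).factorial : ℚ))⁻¹ * ((k : ℚ) + 1)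
          = ((k.factorial : ℚ))⁻¹ := by
        rw [Nat.factorial_succ]
        push_cast
        rw [mul_inv]
        have : ((k : ℚ) + 1) ≠ 0 := by positivity
        field_simp
      have h1 : (c ^ (k + 1) * (((k : ℕ) + 1 : ℕ) : A))
          = ((k : ℚ) + 1) • c ^ (k + 1) := by
        rw [Algebra.smul_def]
        push_cast
        ring
      rw [h1, ← smul_C, smul_mul_assoc, smul_smul, hfac, Nat.add_sub_cancel]
  -- combine
  have key : (∑ i, C (a i) * Q i : A[X]) = C c := by
    have h1 : (∑ i, (∏ k ∈ Finset.univ.erase i, u k) * C (a i) : A[X])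
        = C c * ∏ i, u i := by
      rw [← hderivP, h, hderivE, ← h]
    have h2 := congrArg (· * ∏ i, Q i) h1
    simp only at h2
    rw [Finset.sum_mul] at h2
    calc (∑ i, C (a i) * Q i : A[X])
        = ∑ i, ((∏ k ∈ Finset.univ.erase i, u k) * C (a i)) * ∏ i, Q i := by
          apply Finset.sum_congr rfl
          intro i _
          rw [← Finset.mul_prod_erase Finset.univ Q (Finset.mem_univ i)]
          rw [show (∏ k ∈ Finset.univ.erase i, u k) * C (a i) * (Q i * ∏ k ∈ Finset.univ.erase i, Q k)
            = C (a i) * Q i * ∏ k ∈ Finset.univ.erase i, (u k * Q k) by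
              rw [Finset.prod_mul_distrib]; ring]
          simp only [fun k => mul_comm (u k) (Q k)]
          simp only [hQu]
          simp
      _ = C c * (∏ i, u i) * ∏ i, Q i := h2
      _ = C c * ∏ i, (Q i * u i) := by rw [Finset.prod_mul_distrib]; ring
      _ = C c := by simp only [hQu, Finset.prod_const_one, mul_one]
  -- compare coefficients at j - 1
  have hco := congrArg (fun p => coeff p (j - 1)) key
  simp only [finset_sum_coeff, coeff_C_mul] at hco
  have hj1 : j - 1 ≠ 0 := by omega
  rw [coeff_C, if_neg hj1] at hco
  have hcoeffQ : ∀ i, (Q i).coeff (j - 1) = (- a i) ^ (j - 1) := by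
    intro i
    rw [hQdef]
    simp only [finset_sum_coeff,
      show (-(C (a i) * X) : A[X]) = C (-a i) * X by rw [C_neg]; ring,
      mul_pow, ← C_pow, coeff_C_mul, coeff_X_pow]
    rw [Finset.sum_eq_single (j - 1)]
    · simp
    · intro k _ hk
      simp [hk, Ne.symm hk]
    · intro hmem
      exact absurd (Finset.mem_range.mpr (by omega)) hmem
  rw [Finset.sum_congr rfl (fun i _ => by rw [hcoeffQ i])] at hco
  have : (∑ i, a i * (-a i) ^ (j - 1) : A) = (-1) ^ (j-1) * ∑ i, a i ^ j := by
    rw [Finset.mul_sum]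
    apply Finset.sum_congr rfl
    intro i _
    obtain ⟨m, rfl⟩ : ∃ m, j = m + 1 := ⟨j - 1, by omega⟩
    rw [Nat.add_sub_cancel]
    ring
  rw [this] at hco
  have h2 := congrArg (fun x => (-1 : A) ^ (j - 1) * x) hco
  simp only [mul_zero, ← mul_assoc, ← mul_pow, neg_mul_neg, one_mul, one_pow] at h2
  exact h2
end

section
/- Conversely, in the polynomial ring ℚ[a_1,...,a_r], if the elementary symmetric polynomials satisfy e_k = e_1^k/k! for all 1 ≤ k ≤ r modulo an ideal I, then the power sums satisfy p_j ∈ I for all 2 ≤ j ≤ r. -/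
/-!
Newton's identity `k e_k = ∑_{j=1}^{k} (-1)^(j-1) e_(k-j) p_j`, read modulo the power sums
`p_2, …, p_(k-1)` (which lie in `I` by strong induction), leaves only `p_k` and the term
`e_(k-1) p_1 = e_(k-1) e_1`. Modulo `I` the hypothesis makes `k e_k` and `e_(k-1) e_1` both
equal to `e_1^k / (k-1)!`, so `p_k ∈ I`.
-/

open MvPolynomial Finset

namespace MvPolynomial

variable {σ R : Type*} [Fintype σ] [CommRing R]

theorem psum_add_neg_one_pow_mul_mem_of_psum_mem (I : Ideal (MvPolynomial σ R)) (k : ℕ)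
    (hI : ∀ j, 2 ≤ j → j < k + 2 → psum σ R j ∈ I) :
    psum σ R (k + 2) +
      (-1) ^ k * ((k + 2 : ℕ) * esymm σ R (k + 2) - esymm σ R (k + 1) * esymm σ R 1) ∈ I := by
  set S := {a ∈ antidiagonal (k + 2) | a.1 ∈ Set.Ioo 0 (k + 2)}
  have hmem : (k + 1, 1) ∈ S := by simp [S]
  have hrest : ∑ a ∈ S.erase (k + 1, 1), (-1) ^ a.1 * esymm σ R a.1 * psum σ R a.2 ∈ I := by
    refine I.sum_mem fun a ha => I.mul_mem_left _ (hI a.2 ?_ ?_)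
    all_goals
      simp only [S, mem_erase, mem_filter, HasAntidiagonal.mem_antidiagonal, Set.mem_Ioo, ne_eq,
        Prod.ext_iff, not_and] at ha
      omega
  convert I.neg_mem hrest using 1
  rw [psum_eq_mul_esymm_sub_sum σ R (k + 2) (by omega), ← sum_erase_add _ _ hmem,
    psum_one, ← esymm_one]
  ring

end MvPolynomial

theorem natCast_succ_mul_sub_mul_mem {A : Type*} [CommRing A] [Algebra ℚ A] (I : Ideal A)
    (n : ℕ) {x y z : A} (hy : y - (n.factorial : ℚ)⁻¹ • x ^ n ∈ I)
    (hz : z - ((n + 1).factorial : ℚ)⁻¹ • x ^ (n + 1) ∈ I) :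
    ((n + 1 : ℕ) : A) * z - y * x ∈ I := by
  have hcoeff : algebraMap ℚ A (n + 1 : ℕ) * algebraMap ℚ A ((n + 1).factorial : ℚ)⁻¹ =
      algebraMap ℚ A (n.factorial : ℚ)⁻¹ := by
    rw [← map_mul, Nat.factorial_succ, Nat.cast_mul, mul_inv, ← mul_assoc,
      mul_inv_cancel₀ (by positivity), one_mul]
  convert I.sub_mem (I.mul_mem_left ((n + 1 : ℕ) : A) hz) (I.mul_mem_right x hy) using 1
  rw [Algebra.smul_def, Algebra.smul_def, ← map_natCast (algebraMap ℚ A)]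
  linear_combination x ^ (n + 1) * hcoeff

theorem psum_mem_of_esymm_eq_pow_div_factorial (r : ℕ)
    (I : Ideal (MvPolynomial (Fin r) ℚ))
    (h : ∀ k : ℕ, 1 ≤ k → k ≤ r →
      (esymm (Fin r) ℚ k - ((k.factorial : ℚ)⁻¹) • (esymm (Fin r) ℚ 1) ^ k) ∈ I) :
    ∀ j : ℕ, 2 ≤ j → j ≤ r → psum (Fin r) ℚ j ∈ I := by
  intro j
  induction j using Nat.strong_induction_on with
  | _ j ih =>
  intro hj2 hjr
  obtain ⟨k, rfl⟩ : ∃ k, j = k + 2 := ⟨j - 2, by omega⟩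
  have hnewton := psum_add_neg_one_pow_mul_mem_of_psum_mem I k
    fun i hi hik => ih i hik hi (by omega)
  have hdiff := natCast_succ_mul_sub_mul_mem I (k + 1) (h (k + 1) (by omega) (by omega))
    (h (k + 2) (by omega) hjr)
  convert I.sub_mem hnewton (I.mul_mem_left ((-1) ^ k) hdiff) using 1
  ring
end
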